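/- arXiv:2604.20253 — 5 statements merged into one kernel-verified Lean document; each statement's English description precedes it below -/
import Mathlib

section
/- Let F be a subformula-closed set of CTL formulas and let M = ⟨S,C,R,L⟩ be a sound model over F. Then for every assertion a = (s,φ,b) with L(s,φ) = b and φ ∈ F a compound formula, the model ⟨S,C,R,L restricted to S×children(φ)⟩ is evidence for a. -/
namespace CTLviz

/-- CTL formulas over basic propositions from `P`, generated by the core grammar
`φ ::= p | ⊤ | ¬ψ | ψ₁∨ψ₂ | EX ψ | E[ψ₁ U ψ₂] | EG ψ`. -/
inductive Formula (P : Type) : Type where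
  | prop : P → Formula P
  | tt : Formula P
  | neg : Formula P → Formula P
  | or : Formula P → Formula P → Formula P
  | EX : Formula P → Formula P
  | EU : Formula P → Formula P → Formula P
  | EG : Formula P → Formula P

namespace Formula

variable {P : Type}

/-- The set of immediate subformulas. -/
def children : Formula P → Set (Formula P)
  | .prop _ => ∅
  | .tt => ∅
  | .neg ψ => {ψ}
  | .or ψ₁ ψ₂ => {ψ₁, ψ₂}
  | .EX ψ => {ψ}
  | .EU ψ₁ ψ₂ => {ψ₁, ψ₂}
  | .EG ψ => {ψ}

/-- Compound formulas are those that are not basic propositions. -/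
def Compound : Formula P → Prop
  | .prop _ => False
  | _ => True

/-- Formulas in which the only operators occurring are ¬, ∨ and EU. -/
def OnlyNegOrEU : Formula P → Prop
  | .prop _ => True
  | .tt => False
  | .neg ψ => ψ.OnlyNegOrEU
  | .or ψ₁ ψ₂ => ψ₁.OnlyNegOrEU ∧ ψ₂.OnlyNegOrEU
  | .EX _ => False
  | .EU ψ₁ ψ₂ => ψ₁.OnlyNegOrEU ∧ ψ₂.OnlyNegOrEU
  | .EG _ => False

/-- The list of occurrences of basic propositions in a formula. -/
def props : Formula P → List P
  | .prop p => [p]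
  | .tt => []
  | .neg ψ => ψ.props
  | .or ψ₁ ψ₂ => ψ₁.props ++ ψ₂.props
  | .EX ψ => ψ.props
  | .EU ψ₁ ψ₂ => ψ₁.props ++ ψ₂.props
  | .EG ψ => ψ.props

/-- EU- and EG-formulas. -/
def IsEUorEG : Formula P → Prop
  | .EU _ _ => True
  | .EG _ => True
  | _ => False

end Formula

/-- A set of formulas is subformula-closed if it contains all immediate
subformulas of its members. -/
def SubformulaClosed {P : Type} (F : Set (Formula P)) : Prop :=
  ∀ φ ∈ F, Formula.children φ ⊆ F

/-- Finite or infinite sequences over `σ`: `get n = some a` means that position `n`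
(0-based) holds `a`; the domain is downward closed.  Infinite sequences are
everywhere defined, finite ones are eventually `none`. -/
structure FSeq (σ : Type) : Type where
  get : ℕ → Option σ
  down : ∀ n, get n = none → get (n + 1) = none

theorem FSeq.ext' {σ : Type} {ρ ρ' : FSeq σ} (h : ∀ n, ρ.get n = ρ'.get n) : ρ = ρ' := by
  cases ρ with
  | mk g d =>
    cases ρ' with
    | mk g' d' =>
      have hg : g = g' := funext h
      subst hg
      rfl

/-- `ρ.IsPrefix ρ'` : the sequence `ρ` is a prefix of `ρ'`. -/
def FSeq.IsPrefix {σ : Type} (ρ ρ' : FSeq σ) : Prop :=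
  ∀ n a, ρ.get n = some a → ρ'.get n = some a

/-- All elements of the sequence lie in `Z`. -/
def SeqAll {σ : Type} (Z : Set σ) (ρ : FSeq σ) : Prop :=
  ∀ n a, ρ.get n = some a → a ∈ Z

/-- A relation is acyclic if no element is related to itself by the
transitive closure of the relation. -/
def Acyclic {σ : Type} (R : Set (σ × σ)) : Prop :=
  ∀ a, ¬ Relation.TransGen (fun x y => (x, y) ∈ R) a a

/-- The relation `<ρ` linking consecutive elements of a (finite) sequence,
here given as a list. -/
def ListConsec {σ : Type} (l : List σ) : Set (σ × σ) :=
  {p | ∃ i, l[i]? = some p.1 ∧ l[i + 1]? = some p.2}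

/-- A model over a set `F` of formulas: a countable set `S` of states taken from the
universe `σ`, a subset `C ⊆ S` of closed states, a transition relation `R ⊆ S×S` and
a partial labelling `L : S × F ⇀ Bool` (encoded via `Option Bool`). -/
structure Model (σ P : Type) (F : Set (Formula P)) : Type where
  S : Set σ
  C : Set σ
  R : Set (σ × σ)
  L : σ → Formula P → Option Bool
  countable_S : S.Countable
  C_sub : C ⊆ S
  R_sub : ∀ p ∈ R, p.1 ∈ S ∧ p.2 ∈ S
  L_dom : ∀ s φ, L s φ ≠ none → s ∈ S ∧ φ ∈ F

namespace Model

variable {σ P : Type} {F : Set (Formula P)}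

/-- Direct successors of a state. -/
def succ (M : Model σ P F) (s : σ) : Set σ := {t | (s, t) ∈ M.R}

/-- The R-maximal (terminal) states, i.e. those without outgoing transitions. -/
def terminal (M : Model σ P F) : Set σ := {a ∈ M.S | ∀ b, (a, b) ∉ M.R}

/-- A (finite or infinite) path from `s`: consecutive elements are R-related. -/
def IsPath (M : Model σ P F) (s : σ) (ρ : FSeq σ) : Prop :=
  ρ.get 0 = some s ∧
  (∀ n a, ρ.get n = some a → a ∈ M.S) ∧
  (∀ n a b, ρ.get n = some a → ρ.get (n + 1) = some b → (a, b) ∈ M.R)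

/-- A maximal path from `s`: a path that is not a proper prefix of another path. -/
def IsMaxPath (M : Model σ P F) (s : σ) (ρ : FSeq σ) : Prop :=
  M.IsPath s ρ ∧ ∀ ρ', M.IsPath s ρ' → ρ.IsPrefix ρ' → ρ' = ρ

/-- A model is full if all its states are closed and its labelling is total on `S × F`. -/
def Full (M : Model σ P F) : Prop :=
  M.C = M.S ∧ ∀ s ∈ M.S, ∀ φ ∈ F, M.L s φ ≠ none

/-- Standard CTL satisfaction (used on full models). -/
def Sat (M : Model σ P F) : Formula P → σ → Prop
  | .prop p, s => M.L s (.prop p) = some true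
  | .tt, _ => True
  | .neg ψ, s => ¬ Sat M ψ s
  | .or ψ₁ ψ₂, s => Sat M ψ₁ s ∨ Sat M ψ₂ s
  | .EX ψ, s => ∃ t ∈ M.succ s, Sat M ψ t
  | .EU ψ₁ ψ₂, s => ∃ ρ, M.IsMaxPath s ρ ∧ ∃ n b, ρ.get n = some b ∧ Sat M ψ₂ b ∧
      ∀ i < n, ∀ a, ρ.get i = some a → Sat M ψ₁ a
  | .EG ψ, s => ∃ ρ, M.IsMaxPath s ρ ∧ ∀ n a, ρ.get n = some a → Sat M ψ a

/-- A model is sound if it is full and its labelling agrees with satisfaction. -/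
def Sound (M : Model σ P F) : Prop :=
  M.Full ∧ ∀ s ∈ M.S, ∀ φ ∈ F, (M.L s φ = some true ↔ M.Sat φ s)

end Model

/-- The submodel relation `⊑`: componentwise inclusion, where moreover every
transition of `M₂` missing in `M₁` starts outside the closed states of `M₁`. -/
def Submodel {σ P : Type} {F : Set (Formula P)} (M₁ M₂ : Model σ P F) : Prop :=
  M₁.S ⊆ M₂.S ∧ M₁.C ⊆ M₂.C ∧ M₁.R ⊆ M₂.R ∧
  (∀ s φ b, M₁.L s φ = some b → M₂.L s φ = some b) ∧
  ∀ p ∈ M₂.R, p ∉ M₁.R → p.1 ∉ M₁.C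

/-- Proper submodels. -/
def ProperSubmodel {σ P : Type} {F : Set (Formula P)} (M₁ M₂ : Model σ P F) : Prop :=
  Submodel M₁ M₂ ∧ ¬ Submodel M₂ M₁

/-- A model is consistent if it has a sound supermodel. -/
def Consistent {σ P : Type} {F : Set (Formula P)} (M : Model σ P F) : Prop :=
  ∃ N : Model σ P F, N.Sound ∧ Submodel M N

/-- A consistent model `M` is evidence for the assertion `(s, φ, b)` if its labelling
domain is contained in `S × children(φ)` and every sound supermodel `N ⊒ M` has
`L_N(s,φ) = b`. -/
def Evidence {σ P : Type} {F : Set (Formula P)} (M : Model σ P F)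
    (s : σ) (φ : Formula P) (b : Bool) : Prop :=
  Consistent M ∧ (∀ t ψ, M.L t ψ ≠ none → ψ ∈ Formula.children φ) ∧
  ∀ N : Model σ P F, N.Sound → Submodel M N → N.L s φ = some b

/-- A witness for `(s, φ)` is evidence for `(s, φ, true)`. -/
def Witness {σ P : Type} {F : Set (Formula P)} (M : Model σ P F)
    (s : σ) (φ : Formula P) : Prop :=
  Evidence M s φ true

/-- A counterexample for `(s, φ)` is evidence for `(s, φ, false)`. -/
def Counterexample {σ P : Type} {F : Set (Formula P)} (M : Model σ P F)
    (s : σ) (φ : Formula P) : Prop :=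
  Evidence M s φ false

namespace Model

variable {σ P : Type} {F : Set (Formula P)}

/-- The witness condition `W_M(s,φ)` (Table 1); arbitrary (`False`) on basic propositions. -/
def W (M : Model σ P F) (s : σ) : Formula P → Prop
  | .prop _ => False
  | .tt => True
  | .neg ψ => M.L s ψ = some false
  | .or ψ₁ ψ₂ => M.L s ψ₁ = some true ∨ M.L s ψ₂ = some true
  | .EX ψ => ∃ t ∈ M.succ s, M.L t ψ = some true
  | .EU ψ₁ ψ₂ => ∃ ρ, M.IsMaxPath s ρ ∧ ∃ n b, ρ.get n = some b ∧ M.L b ψ₂ = some true ∧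
      ∀ i < n, ∀ a, ρ.get i = some a → M.L a ψ₁ = some true
  | .EG ψ => ∃ ρ, M.IsMaxPath s ρ ∧ (∀ n a, ρ.get n = some a → M.L a ψ = some true) ∧
      ∀ n a, ρ.get n = some a → ρ.get (n + 1) = none → a ∈ M.C

/-- The counterexample condition `C_M(s,φ)` (Table 1); arbitrary (`False`) on basic
propositions. -/
def Cc (M : Model σ P F) (s : σ) : Formula P → Prop
  | .prop _ => False
  | .tt => False
  | .neg ψ => M.L s ψ = some true
  | .or ψ₁ ψ₂ => M.L s ψ₁ = some false ∧ M.L s ψ₂ = some false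
  | .EX ψ => s ∈ M.C ∧ ∀ t ∈ M.succ s, M.L t ψ = some false
  | .EU ψ₁ ψ₂ => ∀ ρ, M.IsMaxPath s ρ →
      ((∀ n a, ρ.get n = some a → a ∈ M.C ∧ M.L a ψ₂ = some false) ∨
        ∃ n b, ρ.get n = some b ∧ M.L b ψ₁ = some false ∧ M.L b ψ₂ = some false ∧
          ∀ i < n, ∀ a, ρ.get i = some a → a ∈ M.C ∧ M.L a ψ₂ = some false)
  | .EG ψ => ∀ ρ, M.IsMaxPath s ρ →
      ∃ n b, ρ.get n = some b ∧ M.L b ψ = some false ∧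
        ∀ i < n, ∀ a, ρ.get i = some a → a ∈ M.C

/-- The minimal-witness condition `mW_M(s,φ)` (Table 2). -/
def mW (M : Model σ P F) (s : σ) : Formula P → Prop
  | .prop _ => False
  | .tt => M.S = {s} ∧ M.C = ∅ ∧ M.R = ∅ ∧ ∀ t ξ, M.L t ξ = none
  | .neg ψ => M.S = {s} ∧ M.C = ∅ ∧ M.R = ∅ ∧
      ∀ t ξ b, M.L t ξ = some b ↔ t = s ∧ ξ = ψ ∧ b = false
  | .or ψ₁ ψ₂ => M.S = {s} ∧ M.C = ∅ ∧ M.R = ∅ ∧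
      ((∀ t ξ b, M.L t ξ = some b ↔ t = s ∧ ξ = ψ₁ ∧ b = true) ∨
        ∀ t ξ b, M.L t ξ = some b ↔ t = s ∧ ξ = ψ₂ ∧ b = true)
  | .EX ψ => ∃ s', M.S = {s, s'} ∧ M.C = ∅ ∧ M.R = {(s, s')} ∧
      ∀ t ξ b, M.L t ξ = some b ↔ t = s' ∧ ξ = ψ ∧ b = true
  | .EU ψ₁ ψ₂ => ∃ l : List σ, l ≠ [] ∧ l.head? = some s ∧ l.Nodup ∧
      M.S = {a | a ∈ l} ∧ M.C = ∅ ∧ M.R = ListConsec l ∧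
      ∀ t ξ b, M.L t ξ = some b ↔
        b = true ∧ ((t ∈ l.dropLast ∧ ξ = ψ₁) ∨ (l.getLast? = some t ∧ ξ = ψ₂))
  | .EG ψ => ∃ ρ : FSeq σ, ρ.get 0 = some s ∧
      (∀ i j a, i < j → ρ.get i = some a → ρ.get j = some a → ρ.get (j + 1) = none) ∧
      M.S = {a | ∃ n, ρ.get n = some a} ∧
      M.C = {a | (∃ n, ρ.get n = some a) ∧ ∀ n, ρ.get n = some a → ρ.get (n + 1) = none} ∧
      M.R = {p | ∃ n, ρ.get n = some p.1 ∧ ρ.get (n + 1) = some p.2} ∧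
      ∀ t ξ b, M.L t ξ = some b ↔ b = true ∧ ξ = ψ ∧ ∃ n, ρ.get n = some t

/-- The minimal-counterexample condition `mC_M(s,φ)` (Table 2). -/
def mC (M : Model σ P F) (s : σ) : Formula P → Prop
  | .prop _ => False
  | .tt => False
  | .neg ψ => M.S = {s} ∧ M.C = ∅ ∧ M.R = ∅ ∧
      ∀ t ξ b, M.L t ξ = some b ↔ t = s ∧ ξ = ψ ∧ b = true
  | .or ψ₁ ψ₂ => M.S = {s} ∧ M.C = ∅ ∧ M.R = ∅ ∧
      ∀ t ξ b, M.L t ξ = some b ↔ t = s ∧ (ξ = ψ₁ ∨ ξ = ψ₂) ∧ b = false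
  | .EX ψ => ∃ T : Set σ, M.S = {s} ∪ T ∧ M.C = {s} ∧
      M.R = {p | p.1 = s ∧ p.2 ∈ T} ∧
      ∀ t ξ b, M.L t ξ = some b ↔ t ∈ T ∧ ξ = ψ ∧ b = false
  | .EU ψ₁ ψ₂ => s ∈ M.S ∧
      (∀ a ∈ M.S, Relation.ReflTransGen (fun x y => (x, y) ∈ M.R) s a) ∧
      M.S \ M.terminal ⊆ M.C ∧
      ∀ t ξ b, M.L t ξ = some b ↔
        b = false ∧ t ∈ M.S ∧ (ξ = ψ₂ ∨ (ξ = ψ₁ ∧ t ∉ M.C))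
  | .EG ψ => M.S.Finite ∧ Acyclic M.R ∧
      {a ∈ M.S | ∀ b, (b, a) ∉ M.R} = {s} ∧
      M.C = M.S \ M.terminal ∧
      ∀ t ξ b, M.L t ξ = some b ↔ b = false ∧ ξ = ψ ∧ t ∈ M.terminal

open Classical in
/-- The model obtained from `M` by restricting the labelling to the formulas in `G`. -/
noncomputable def restrictL (M : Model σ P F) (G : Set (Formula P)) : Model σ P F where
  S := M.S
  C := M.C
  R := M.R
  L := fun t ψ => if ψ ∈ G then M.L t ψ else none
  countable_S := M.countable_S
  C_sub := M.C_sub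
  R_sub := M.R_sub
  L_dom := by
    intro t ψ h
    try dsimp only at h
    by_cases hg : ψ ∈ G
    · rw [if_pos hg] at h
      exact M.L_dom t ψ h
    · rw [if_neg hg] at h
      exact absurd rfl h

open Classical in
/-- The restriction `M|s` of `M` to the states R-reachable from `s`. -/
noncomputable def restrictReach (M : Model σ P F) (s : σ) : Model σ P F where
  S := {t ∈ M.S | Relation.ReflTransGen (fun x y => (x, y) ∈ M.R) s t}
  C := {t ∈ M.C | Relation.ReflTransGen (fun x y => (x, y) ∈ M.R) s t}
  R := {p ∈ M.R | Relation.ReflTransGen (fun x y => (x, y) ∈ M.R) s p.1}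
  L := fun t ψ =>
    if Relation.ReflTransGen (fun x y => (x, y) ∈ M.R) s t then M.L t ψ else none
  countable_S := M.countable_S.mono fun t ht => ht.1
  C_sub := fun t ht => ⟨M.C_sub ht.1, ht.2⟩
  R_sub := fun p hp =>
    ⟨⟨(M.R_sub p hp.1).1, hp.2⟩, ⟨(M.R_sub p hp.1).2, hp.2.tail hp.1⟩⟩
  L_dom := by
    intro t ψ h
    try dsimp only at h
    by_cases hg : Relation.ReflTransGen (fun x y => (x, y) ∈ M.R) s t
    · rw [if_pos hg] at h
      exact ⟨⟨(M.L_dom t ψ h).1, hg⟩, (M.L_dom t ψ h).2⟩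
    · rw [if_neg hg] at h
      exact absurd rfl h

end Model

/-- Natural evidence (for an EU- or EG-assertion): evidence whose labelling is defined
on every child of the formula at every non-R-maximal state. -/
def NaturalEvidence {σ P : Type} {F : Set (Formula P)} (M : Model σ P F)
    (s : σ) (φ : Formula P) (b : Bool) : Prop :=
  Evidence M s φ b ∧ Formula.IsEUorEG φ ∧
  ∀ t ∈ M.S, (∃ u, (t, u) ∈ M.R) → ∀ ψ ∈ Formula.children φ, M.L t ψ ≠ none

/-- Minimal natural evidence: natural evidence none of whose proper submodels is
natural evidence for the same assertion. -/
def MinNaturalEvidence {σ P : Type} {F : Set (Formula P)} (M : Model σ P F)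
    (s : σ) (φ : Formula P) (b : Bool) : Prop :=
  NaturalEvidence M s φ b ∧
  ∀ N : Model σ P F, ProperSubmodel N M → ¬ NaturalEvidence N s φ b

/-- A set `G` of formulas is constrained (relative to `F` and the state universe `σ`)
if there exists an inconsistent model over `F` whose labelling domain is contained
in `S × G`. -/
def Constrained (σ : Type) {P : Type} (F : Set (Formula P)) (G : Set (Formula P)) : Prop :=
  ∃ M : Model σ P F, (∀ t ψ, M.L t ψ ≠ none → ψ ∈ G) ∧ ¬ Consistent M

/-- A proof over `F`: a model `N` together with a map `π` assigning to every compound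
assertion `(s,φ,b)` of `N` a submodel of `N` that is evidence for it. -/
def IsProof {σ P : Type} {F : Set (Formula P)} (N : Model σ P F)
    (π : σ → Formula P → Bool → Model σ P F) : Prop :=
  ∀ s φ b, N.L s φ = some b → Formula.Compound φ →
    Submodel (π s φ b) N ∧ Evidence (π s φ b) s φ b

/-!
Since `M` is full, all of its states are closed, so a supermodel `N` of the restriction adds
no transitions leaving `M`: the successors of `s` and the maximal paths from `s` are the same
in `N` and in `M`. Both models carry the same labels on the children of `φ`, so by soundness
they agree on the truth of the children, and the truth of a compound formula at `s` is
determined by these data. Soundness again gives `L_N(s,φ) = L_M(s,φ) = b`.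
-/

namespace Model

variable {σ P : Type} {F : Set (Formula P)}

open Classical in
theorem Sound.L_eq_decide_sat {M : Model σ P F} (hM : M.Sound) {t : σ} (ht : t ∈ M.S)
    {ψ : Formula P} (hψ : ψ ∈ F) :
    M.L t ψ = some (decide (M.Sat ψ t)) := by
  obtain ⟨c, hc⟩ := Option.ne_none_iff_exists'.1 (hM.1.2 t ht ψ hψ)
  have hsat := hM.2 t ht ψ hψ
  rw [hc] at hsat ⊢
  cases c <;> simp_all

theorem Sound.sat_iff_of_L_eq {M N : Model σ P F} (hM : M.Sound) (hN : N.Sound) {t : σ}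
    (htM : t ∈ M.S) (htN : t ∈ N.S) {ψ : Formula P} (hψ : ψ ∈ F) (h : M.L t ψ = N.L t ψ) :
    M.Sat ψ t ↔ N.Sat ψ t := by
  classical
  rw [hM.L_eq_decide_sat htM hψ, hN.L_eq_decide_sat htN hψ, Option.some_inj] at h
  exact decide_eq_decide.1 h

theorem restrictL_submodel (M : Model σ P F) (G : Set (Formula P)) :
    Submodel (M.restrictL G) M := by
  refine ⟨subset_rfl, subset_rfl, subset_rfl, fun t ψ c h => ?_, fun p hp hnp => absurd hp hnp⟩
  simp only [restrictL] at h
  split at h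
  · exact h
  · exact absurd h nofun

theorem mem_of_restrictL_L_ne_none {M : Model σ P F} {G : Set (Formula P)} {t : σ}
    {ψ : Formula P}
    (h : (M.restrictL G).L t ψ ≠ none) : ψ ∈ G := by
  by_contra hψ
  simp [restrictL, hψ] at h

theorem restrictL_L_of_mem (M : Model σ P F) {G : Set (Formula P)} (t : σ) {ψ : Formula P}
    (hψ : ψ ∈ G) : (M.restrictL G).L t ψ = M.L t ψ := by
  simp [restrictL, hψ]

theorem sat_congr_of_children {M N : Model σ P F} {s : σ} {φ : Formula P}
    (hφ : φ.Compound) (hs : s ∈ M.S) (hsucc : N.succ s = M.succ s)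
    (hmax : ∀ ρ, N.IsMaxPath s ρ ↔ M.IsMaxPath s ρ)
    (hchild : ∀ t ∈ M.S, ∀ ψ ∈ φ.children, N.Sat ψ t ↔ M.Sat ψ t) :
    N.Sat φ s ↔ M.Sat φ s := by
  cases φ with
  | prop p => exact hφ.elim
  | tt => exact Iff.rfl
  | neg ψ => exact not_congr (hchild s hs ψ rfl)
  | or ψ₁ ψ₂ =>
    exact or_congr (hchild s hs ψ₁ (by simp [Formula.children]))
      (hchild s hs ψ₂ (by simp [Formula.children]))
  | EX ψ =>
    simp only [Sat, hsucc]
    exact exists_congr fun t => and_congr_right fun ht => hchild t (M.R_sub _ ht).2 ψ rfl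
  | EU ψ₁ ψ₂ =>
    simp only [Sat, hmax]
    refine exists_congr fun ρ => and_congr_right fun hρ => ?_
    have hρS := hρ.1.2.1
    refine exists_congr fun n => exists_congr fun c => and_congr_right fun hc => ?_
    refine and_congr (hchild c (hρS n c hc) ψ₂ (by simp [Formula.children])) ?_
    exact forall₂_congr fun i _ => forall₂_congr fun a ha =>
      hchild a (hρS i a ha) ψ₁ (by simp [Formula.children])
  | EG ψ =>
    simp only [Sat, hmax]
    exact exists_congr fun ρ => and_congr_right fun hρ => forall₂_congr fun n a =>
      forall_congr' fun ha => hchild a (hρ.1.2.1 n a ha) ψ rfl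

end Model

namespace Submodel

variable {σ P : Type} {F : Set (Formula P)} {M N : Model σ P F}

theorem mem_R_of_mem_C (h : Submodel M N) {p : σ × σ} (hp : p ∈ N.R) (hC : p.1 ∈ M.C) :
    p ∈ M.R := by
  by_contra hnp
  exact h.2.2.2.2 p hp hnp hC

theorem succ_eq (h : Submodel M N) {s : σ} (hs : s ∈ M.C) : N.succ s = M.succ s :=
  Set.ext fun _ => ⟨fun ht => h.mem_R_of_mem_C ht hs, fun ht => h.2.2.1 ht⟩

theorem L_eq_of_ne_none (h : Submodel M N) {t : σ} {ψ : Formula P} (ht : M.L t ψ ≠ none) :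
    N.L t ψ = M.L t ψ := by
  obtain ⟨c, hc⟩ := Option.ne_none_iff_exists'.1 ht
  rw [hc, h.2.2.2.1 t ψ c hc]

theorem isPath_iff (h : Submodel M N) (hC : M.S ⊆ M.C) {s : σ} (hs : s ∈ M.S) (ρ : FSeq σ) :
    N.IsPath s ρ ↔ M.IsPath s ρ := by
  refine ⟨fun hρ => ?_, fun hρ => ⟨hρ.1, fun n a ha => h.1 (hρ.2.1 n a ha),
    fun n a b ha hb => h.2.2.1 (hρ.2.2 n a b ha hb)⟩⟩
  -- a path of `N` cannot leave `M`: every state it reaches is closed in `M`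
  have hS : ∀ n a, ρ.get n = some a → a ∈ M.S := by
    intro n
    induction n with
    | zero => intro a ha; rw [hρ.1] at ha; exact Option.some_inj.1 ha ▸ hs
    | succ n ih =>
      intro a ha
      obtain ⟨a', ha'⟩ := Option.ne_none_iff_exists'.1 fun hn => by simp [ρ.down n hn] at ha
      exact (M.R_sub _ (h.mem_R_of_mem_C (hρ.2.2 n a' a ha' ha) (hC (ih a' ha')))).2
  exact ⟨hρ.1, hS, fun n a b ha hb => h.mem_R_of_mem_C (hρ.2.2 n a b ha hb) (hC (hS n a ha))⟩

theorem isMaxPath_iff (h : Submodel M N) (hC : M.S ⊆ M.C) {s : σ} (hs : s ∈ M.S)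
    (ρ : FSeq σ) : N.IsMaxPath s ρ ↔ M.IsMaxPath s ρ := by
  simp only [Model.IsMaxPath, h.isPath_iff hC hs]

end Submodel

theorem restrict_is_evidence_general {σ P : Type} {F : Set (Formula P)}
    (hF : SubformulaClosed F) (M : Model σ P F) (hsound : M.Sound)
    (s : σ) (φ : Formula P) (b : Bool) (hφ : φ ∈ F) (hcomp : Formula.Compound φ)
    (ha : M.L s φ = some b) :
    Evidence (M.restrictL (Formula.children φ)) s φ b := by
  refine ⟨⟨M, hsound, M.restrictL_submodel _⟩, fun _ _ => Model.mem_of_restrictL_L_ne_none,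
    fun N hN hsub => ?_⟩
  have hs : s ∈ M.S := (M.L_dom s φ (by simp [ha])).1
  have hclosed : (M.restrictL φ.children).S ⊆ (M.restrictL φ.children).C := hsound.1.1.ge
  have hchild : ∀ t ∈ M.S, ∀ ψ ∈ φ.children, N.Sat ψ t ↔ M.Sat ψ t := by
    intro t ht ψ hψ
    have hψF : ψ ∈ F := hF φ hφ hψ
    have hdef : (M.restrictL φ.children).L t ψ = M.L t ψ := M.restrictL_L_of_mem t hψ
    have hlabel : N.L t ψ = M.L t ψ :=
      (hsub.L_eq_of_ne_none (hdef ▸ hsound.1.2 t ht ψ hψF)).trans hdef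
    exact hN.sat_iff_of_L_eq hsound (hsub.1 ht) ht hψF hlabel
  have hsat : N.Sat φ s ↔ M.Sat φ s := Model.sat_congr_of_children hcomp hs
    (hsub.succ_eq (hclosed hs)) (hsub.isMaxPath_iff hclosed hs) hchild
  rw [hN.L_eq_decide_sat (hsub.1 hs) hφ, ← ha, hsound.L_eq_decide_sat hs hφ,
    decide_eq_decide.2 hsat]

/-- For a sound model `M` over a subformula-closed `F` and any assertion
`(s,φ,b)` of `M` with `φ ∈ F` compound, the model `⟨S,C,R,L↾S×children(φ)⟩`
is evidence for `(s,φ,b)`. -/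
theorem restrict_is_evidence {σ P : Type} [Countable P] {F : Set (Formula P)}
    (hF : SubformulaClosed F) (M : Model σ P F) (hsound : M.Sound)
    (s : σ) (φ : Formula P) (b : Bool) (hφ : φ ∈ F) (hcomp : Formula.Compound φ)
    (ha : M.L s φ = some b) :
    Evidence (M.restrictL (Formula.children φ)) s φ b :=
  restrict_is_evidence_general hF M hsound s φ b hφ hcomp ha

end CTLviz
end

section
/- Let M₁ ⊑ M₂ be models over a subformula-closed set F of CTL formulas, and let s ∈ S₁. For every maximal path ρ of M₁ starting at s there is a maximal path ρ' of M₂ starting at s such that ρ is a prefix of ρ'; moreover, if ρ is finite and its last state lies in C₁, then ρ = ρ'. -/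
namespace CTLviz

namespace FSeq

variable {σ : Type}

theorem get_eq_none_of_le {ρ : FSeq σ} {m n : ℕ} (h : ρ.get m = none) (hmn : m ≤ n) :
    ρ.get n = none := by
  induction n, hmn using Nat.le_induction with
  | base => exact h
  | succ n _ ih => exact ρ.down n ih

theorem get_ne_none_of_le {ρ : FSeq σ} {m n : ℕ} (h : ρ.get n ≠ none) (hmn : m ≤ n) :
    ρ.get m ≠ none :=
  fun hm => h (get_eq_none_of_le hm hmn)

theorem eq_of_last {ρ : FSeq σ} {m n : ℕ} (hm : ρ.get m ≠ none) (hm1 : ρ.get (m + 1) = none)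
    (hn : ρ.get n ≠ none) (hn1 : ρ.get (n + 1) = none) : m = n := by
  by_contra hne
  rcases Nat.lt_or_gt_of_ne hne with hlt | hlt
  · exact hn (get_eq_none_of_le hm1 hlt)
  · exact hm (get_eq_none_of_le hn1 hlt)

/-- The first `k + 1` entries of `ρ`, followed by `τ`. -/
def appendAt (ρ : FSeq σ) (k : ℕ) (hk : ρ.get k ≠ none) (τ : FSeq σ) : FSeq σ where
  get n := if n ≤ k then ρ.get n else τ.get (n - (k + 1))
  down n hn := by
    by_cases hnk : n ≤ k
    · rw [if_pos hnk] at hn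
      exact absurd hn (get_ne_none_of_le hk hnk)
    · rw [if_neg hnk] at hn
      rw [if_neg (by omega), show n + 1 - (k + 1) = n - (k + 1) + 1 by omega]
      exact τ.down _ hn

variable {ρ τ : FSeq σ} {k : ℕ} {hk : ρ.get k ≠ none}

theorem appendAt_get_of_le {n : ℕ} (hn : n ≤ k) : (ρ.appendAt k hk τ).get n = ρ.get n :=
  if_pos hn

theorem appendAt_get_add (n : ℕ) : (ρ.appendAt k hk τ).get (k + 1 + n) = τ.get n := by
  simp only [appendAt]
  rw [if_neg (by omega), Nat.add_sub_cancel_left]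

theorem isPrefix_appendAt (hk1 : ρ.get (k + 1) = none) : ρ.IsPrefix (ρ.appendAt k hk τ) := by
  intro n a ha
  have hn : n ≤ k := by
    by_contra hlt
    rw [get_eq_none_of_le hk1 (by omega)] at ha
    exact Option.some_ne_none a ha.symm
  rwa [appendAt_get_of_le hn]

end FSeq

namespace Model

variable {σ P : Type} {F : Set (Formula P)} {M : Model σ P F} {s : σ} {ρ : FSeq σ}

theorem IsPath.isMaxPath (hρ : M.IsPath s ρ)
    (hlast : ∀ n a, ρ.get n = some a → ρ.get (n + 1) = none → ∀ b, (a, b) ∉ M.R) :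
    M.IsMaxPath s ρ := by
  refine ⟨hρ, fun ρ' hρ' hpre => FSeq.ext' fun n => ?_⟩
  induction n with
  | zero => rw [hρ'.1, hρ.1]
  | succ n ih =>
    cases hv : ρ.get (n + 1) with
    | some a => exact hpre _ _ hv
    | none =>
      cases hu : ρ.get n with
      | none => exact ρ'.down n (ih.trans hu)
      | some a =>
        cases hw : ρ'.get (n + 1) with
        | none => rfl
        | some b => exact absurd (hρ'.2.2 n a b (hpre _ _ hu) hw) (hlast n a hu hv b)

open Classical in
noncomputable def next (M : Model σ P F) (a : σ) : Option σ :=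
  if h : ∃ b, (a, b) ∈ M.R then some h.choose else none

theorem mem_R_of_next_eq_some {a b : σ} (h : M.next a = some b) : (a, b) ∈ M.R := by
  unfold next at h
  split_ifs at h with hex
  exact Option.some_injective _ h ▸ hex.choose_spec

theorem not_mem_R_of_next_eq_none {a : σ} (h : M.next a = none) (b : σ) : (a, b) ∉ M.R := by
  intro hab
  unfold next at h
  rw [dif_pos ⟨b, hab⟩] at h
  exact Option.some_ne_none _ h

noncomputable def greedyPath (M : Model σ P F) (s : σ) : FSeq σ where
  get n := (fun o => o.bind M.next)^[n] (some s)
  down n h := by rw [Function.iterate_succ_apply', h, Option.bind_none]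

theorem greedyPath_get_succ (n : ℕ) :
    (M.greedyPath s).get (n + 1) = ((M.greedyPath s).get n).bind M.next :=
  Function.iterate_succ_apply' _ _ _

theorem isMaxPath_greedyPath (hs : s ∈ M.S) : M.IsMaxPath s (M.greedyPath s) := by
  have hstep : ∀ n a b, (M.greedyPath s).get n = some a →
      (M.greedyPath s).get (n + 1) = some b → (a, b) ∈ M.R := by
    intro n a b ha hb
    rw [greedyPath_get_succ, ha, Option.bind_some] at hb
    exact mem_R_of_next_eq_some hb
  have hmem : ∀ n a, (M.greedyPath s).get n = some a → a ∈ M.S := by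
    intro n
    induction n with
    | zero => intro a ha; exact Option.some_injective _ ha ▸ hs
    | succ n ih =>
      intro b hb
      obtain ⟨a, ha⟩ := Option.ne_none_iff_exists'.1
        (FSeq.get_ne_none_of_le (ρ := M.greedyPath s) (by simp [hb]) n.le_succ)
      exact (M.R_sub _ (hstep n a b ha hb)).2
  refine IsPath.isMaxPath ⟨rfl, hmem, hstep⟩ fun n a ha hn => ?_
  rw [greedyPath_get_succ, ha, Option.bind_some] at hn
  exact not_mem_R_of_next_eq_none hn

theorem IsPath.appendAt {k : ℕ} {a b : σ} {τ : FSeq σ} (hρ : M.IsPath s ρ)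
    (hk : ρ.get k = some a) (hτ : M.IsPath b τ) (hab : (a, b) ∈ M.R) :
    M.IsPath s (ρ.appendAt k (by simp [hk]) τ) := by
  refine ⟨by rw [FSeq.appendAt_get_of_le k.zero_le]; exact hρ.1, fun n c hc => ?_,
    fun n c d hc hd => ?_⟩
  · by_cases hn : n ≤ k
    · rw [FSeq.appendAt_get_of_le hn] at hc
      exact hρ.2.1 n c hc
    · obtain ⟨m, rfl⟩ : ∃ m, n = k + 1 + m := ⟨n - (k + 1), by omega⟩
      rw [FSeq.appendAt_get_add] at hc
      exact hτ.2.1 m c hc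
  · rcases lt_trichotomy n k with hlt | rfl | hgt
    · rw [FSeq.appendAt_get_of_le hlt.le] at hc
      rw [FSeq.appendAt_get_of_le hlt] at hd
      exact hρ.2.2 n c d hc hd
    · rw [FSeq.appendAt_get_of_le le_rfl, hk] at hc
      rw [← add_zero (n + 1), FSeq.appendAt_get_add, hτ.1] at hd
      cases hc; cases hd; exact hab
    · obtain ⟨m, rfl⟩ : ∃ m, n = k + 1 + m := ⟨n - (k + 1), by omega⟩
      rw [FSeq.appendAt_get_add] at hc
      rw [add_assoc, FSeq.appendAt_get_add] at hd
      exact hτ.2.2 m c d hc hd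

/-- Otherwise `ρ` could be continued through the transition `(a, b)`. -/
theorem IsMaxPath.not_mem_R_of_last {k : ℕ} {a : σ} (hρ : M.IsMaxPath s ρ)
    (hk : ρ.get k = some a) (hk1 : ρ.get (k + 1) = none) (b : σ) : (a, b) ∉ M.R := by
  intro hab
  have hext := hρ.1.appendAt hk (isMaxPath_greedyPath (M.R_sub _ hab).2).1 hab
  have hsucc := hρ.2 _ hext (FSeq.isPrefix_appendAt hk1)
  rw [← hsucc, ← add_zero (k + 1), FSeq.appendAt_get_add] at hk1
  exact Option.some_ne_none b hk1

theorem isMaxPath_iff : M.IsMaxPath s ρ ↔ M.IsPath s ρ ∧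
    ∀ n a, ρ.get n = some a → ρ.get (n + 1) = none → ∀ b, (a, b) ∉ M.R :=
  ⟨fun h => ⟨h.1, fun _ _ => h.not_mem_R_of_last⟩, fun h => h.1.isMaxPath h.2⟩

theorem IsPath.isMaxPath_appendAt {k : ℕ} {a b : σ} {τ : FSeq σ} (hρ : M.IsPath s ρ)
    (hk : ρ.get k = some a) (hτ : M.IsMaxPath b τ) (hab : (a, b) ∈ M.R) :
    M.IsMaxPath s (ρ.appendAt k (by simp [hk]) τ) := by
  refine (hρ.appendAt hk hτ.1 hab).isMaxPath fun n c hc hn => ?_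
  rcases lt_trichotomy n k with hlt | rfl | hgt
  · rw [FSeq.appendAt_get_of_le hlt] at hn
    exact absurd hn (FSeq.get_ne_none_of_le (by simp [hk]) hlt)
  · rw [← add_zero (n + 1), FSeq.appendAt_get_add, hτ.1.1] at hn
    exact absurd hn (Option.some_ne_none b)
  · obtain ⟨m, rfl⟩ : ∃ m, n = k + 1 + m := ⟨n - (k + 1), by omega⟩
    rw [FSeq.appendAt_get_add] at hc
    rw [add_assoc, FSeq.appendAt_get_add] at hn
    exact hτ.not_mem_R_of_last hc hn

end Model

theorem Submodel.isPath {σ P : Type} {F : Set (Formula P)} {M₁ M₂ : Model σ P F}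
    (h : Submodel M₁ M₂) {s : σ} {ρ : FSeq σ} (hρ : M₁.IsPath s ρ) : M₂.IsPath s ρ :=
  ⟨hρ.1, fun n a ha => h.1 (hρ.2.1 n a ha), fun n a b ha hb => h.2.2.1 (hρ.2.2 n a b ha hb)⟩

/-- If the last state of `ρ` has a successor `b` in `M₂`, that transition is new, so the last
state is not closed in `M₁` and `ρ` may be continued by a maximal `M₂`-path from `b`. -/
theorem maxpath_extends_in_supermodel_general {σ P : Type} {F : Set (Formula P)}
    (M₁ M₂ : Model σ P F) (h : Submodel M₁ M₂)
    (s : σ) (ρ : FSeq σ) (hρ : M₁.IsMaxPath s ρ) :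
    ∃ ρ' : FSeq σ, M₂.IsMaxPath s ρ' ∧ ρ.IsPrefix ρ' ∧
      ((∃ n a, ρ.get n = some a ∧ ρ.get (n + 1) = none ∧ a ∈ M₁.C) → ρ' = ρ) := by
  by_cases hext : ∃ k a, ρ.get k = some a ∧ ρ.get (k + 1) = none ∧ ∃ b, (a, b) ∈ M₂.R
  · obtain ⟨k, a, hk, hk1, b, hab⟩ := hext
    have haC : a ∉ M₁.C := h.2.2.2.2 (a, b) hab (hρ.not_mem_R_of_last hk hk1 b)
    refine ⟨_, (h.isPath hρ.1).isMaxPath_appendAt hk (M₂.isMaxPath_greedyPath (M₂.R_sub _ hab).2) hab,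
      FSeq.isPrefix_appendAt hk1, ?_⟩
    rintro ⟨n, c, hc, hc1, hcC⟩
    obtain rfl : n = k := FSeq.eq_of_last (by simp [hc]) hc1 (by simp [hk]) hk1
    rw [hk] at hc
    cases hc
    exact absurd hcC haC
  · push Not at hext
    exact ⟨ρ, Model.isMaxPath_iff.2 ⟨h.isPath hρ.1, hext⟩, fun _ _ => id, fun _ => rfl⟩

/-- If `M₁ ⊑ M₂` and `s ∈ S₁`, every maximal path `ρ` of `M₁` from `s`
is a prefix of some maximal path `ρ'` of `M₂` from `s`; if moreover `ρ` is finite with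
last state in `C₁`, then `ρ' = ρ`. -/
theorem maxpath_extends_in_supermodel {σ P : Type} [Countable P] {F : Set (Formula P)}
    (hF : SubformulaClosed F) (M₁ M₂ : Model σ P F) (h : Submodel M₁ M₂)
    (s : σ) (hs : s ∈ M₁.S) (ρ : FSeq σ) (hρ : M₁.IsMaxPath s ρ) :
    ∃ ρ' : FSeq σ, M₂.IsMaxPath s ρ' ∧ ρ.IsPrefix ρ' ∧
      ((∃ n a, ρ.get n = some a ∧ ρ.get (n + 1) = none ∧ a ∈ M₁.C) → ρ' = ρ) :=
  maxpath_extends_in_supermodel_general M₁ M₂ h s ρ hρ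

end CTLviz
end

section
/- Let F be a subformula-closed set of CTL formulas and let M be a full model over F. For all states s ∈ S and all compound formulas φ ∈ F, exactly one of the conditions W_M(s,φ) and C_M(s,φ) holds. -/
namespace CTLviz

/-! The two conditions never hold together in any model, since their clauses demand
opposite labels of one state. In a full model the labels on `S × F` are total and every
state is closed, so `C_M(s,φ)` is exactly the negation of `W_M(s,φ)`; for `EU` the decisive
state on a path is the first one where `ψ₂` holds, which must be preceded by a state
refuting `ψ₁`. -/

theorem FSeq.forall_not_or_exists_first {σ : Type} (ρ : FSeq σ) (q : σ → Prop) :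
    (∀ n a, ρ.get n = some a → ¬ q a) ∨
      ∃ n b, ρ.get n = some b ∧ q b ∧ ∀ i < n, ∀ a, ρ.get i = some a → ¬ q a := by
  classical
  by_cases h : ∃ n b, ρ.get n = some b ∧ q b
  · obtain ⟨b, hb, hqb⟩ := Nat.find_spec h
    exact Or.inr ⟨Nat.find h, b, hb, hqb, fun i hi a ha hqa => Nat.find_min h hi ⟨a, ha, hqa⟩⟩
  · exact Or.inl fun n a ha hqa => h ⟨n, a, ha, hqa⟩

namespace Model

variable {σ P : Type} {F : Set (Formula P)}

theorem not_W_and_Cc (M : Model σ P F) (s : σ) (φ : Formula P) :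
    ¬ (M.W s φ ∧ M.Cc s φ) := by
  rintro ⟨hW, hC⟩
  cases φ with
  | prop _ => exact hW
  | tt => exact hC
  | neg ψ => exact Bool.false_ne_true (Option.some_injective _ (hW.symm.trans hC))
  | or ψ₁ ψ₂ => rcases hW with h | h <;> simp [Cc, h] at hC
  | EX ψ =>
      obtain ⟨t, ht, htrue⟩ := hW
      simp [hC.2 t ht] at htrue
  | EU ψ₁ ψ₂ =>
      obtain ⟨ρ, hρ, n, b, hb, hb₂, hb₁⟩ := hW
      rcases hC ρ hρ with hall | ⟨m, c, hc, hc₁, hc₂, hbefore⟩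
      · simp [(hall n b hb).2] at hb₂
      · rcases lt_trichotomy m n with hmn | rfl | hnm
        · simp [hb₁ m hmn c hc] at hc₁
        · obtain rfl : b = c := Option.some_injective _ (hb.symm.trans hc)
          simp [hb₂] at hc₂
        · simp [(hbefore n hnm b hb).2] at hb₂
  | EG ψ =>
      obtain ⟨ρ, hρ, hall, -⟩ := hW
      obtain ⟨n, a, ha, hfalse, -⟩ := hC ρ hρ
      simp [hall n a ha] at hfalse

namespace Full

variable {M : Model σ P F}

theorem mem_C (hfull : M.Full) {t : σ} (ht : t ∈ M.S) : t ∈ M.C :=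
  hfull.1 ▸ ht

theorem label_eq_true_or_false (hfull : M.Full) {t : σ} (ht : t ∈ M.S) {ψ : Formula P}
    (hψ : ψ ∈ F) : M.L t ψ = some true ∨ M.L t ψ = some false := by
  rcases h : M.L t ψ with _ | _ | _
  · exact absurd h (hfull.2 t ht ψ hψ)
  · exact Or.inr rfl
  · exact Or.inl rfl

theorem label_eq_false (hfull : M.Full) {t : σ} (ht : t ∈ M.S) {ψ : Formula P}
    (hψ : ψ ∈ F) (hne : M.L t ψ ≠ some true) : M.L t ψ = some false :=
  (hfull.label_eq_true_or_false ht hψ).resolve_left hne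

theorem Cc_EU_of_not_W (hfull : M.Full) {s : σ} {ψ₁ ψ₂ : Formula P} (hψ₁ : ψ₁ ∈ F)
    (hψ₂ : ψ₂ ∈ F) (hW : ¬ M.W s (.EU ψ₁ ψ₂)) : M.Cc s (.EU ψ₁ ψ₂) := by
  intro ρ hρ
  have hρS : SeqAll M.S ρ := hρ.1.2.1
  rcases ρ.forall_not_or_exists_first (M.L · ψ₂ = some true) with
    hnone | ⟨n, b, hb, hb₂, hbefore⟩
  · exact Or.inl fun n a ha =>
      ⟨hfull.mem_C (hρS n a ha), hfull.label_eq_false (hρS n a ha) hψ₂ (hnone n a ha)⟩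
  · have hgap : ¬ ∀ i < n, ∀ a, ρ.get i = some a → M.L a ψ₁ = some true :=
      fun h => hW ⟨ρ, hρ, n, b, hb, hb₂, h⟩
    simp only [not_forall] at hgap
    obtain ⟨i, hi, a, ha, ha₁⟩ := hgap
    exact Or.inr ⟨i, a, ha, hfull.label_eq_false (hρS i a ha) hψ₁ ha₁,
      hfull.label_eq_false (hρS i a ha) hψ₂ (hbefore i hi a ha), fun j hj c hc =>
        ⟨hfull.mem_C (hρS j c hc),
          hfull.label_eq_false (hρS j c hc) hψ₂ (hbefore j (hj.trans hi) c hc)⟩⟩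

theorem Cc_EG_of_not_W (hfull : M.Full) {s : σ} {ψ : Formula P} (hψ : ψ ∈ F)
    (hW : ¬ M.W s (.EG ψ)) : M.Cc s (.EG ψ) := by
  intro ρ hρ
  have hρS : SeqAll M.S ρ := hρ.1.2.1
  have hgap : ¬ ∀ n a, ρ.get n = some a → M.L a ψ = some true :=
    fun h => hW ⟨ρ, hρ, h, fun n a ha _ => hfull.mem_C (hρS n a ha)⟩
  simp only [not_forall] at hgap
  obtain ⟨n, a, ha, hne⟩ := hgap
  exact ⟨n, a, ha, hfull.label_eq_false (hρS n a ha) hψ hne,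
    fun i _ c hc => hfull.mem_C (hρS i c hc)⟩

theorem W_or_Cc (hfull : M.Full) (hF : SubformulaClosed F) {s : σ} (hs : s ∈ M.S)
    {φ : Formula P} (hφ : φ ∈ F) (hcomp : φ.Compound) : M.W s φ ∨ M.Cc s φ := by
  by_cases hW : M.W s φ
  · exact Or.inl hW
  right
  cases φ with
  | prop _ => exact hcomp.elim
  | tt => exact hW trivial
  | neg ψ =>
      exact (hfull.label_eq_true_or_false hs (hF _ hφ rfl)).resolve_right hW
  | or ψ₁ ψ₂ =>
      simp only [W, not_or] at hW
      exact ⟨hfull.label_eq_false hs (hF _ hφ (by simp [Formula.children])) hW.1,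
        hfull.label_eq_false hs (hF _ hφ (by simp [Formula.children])) hW.2⟩
  | EX ψ =>
      exact ⟨hfull.mem_C hs, fun t ht =>
        hfull.label_eq_false (M.R_sub _ ht).2 (hF _ hφ rfl) fun h => hW ⟨t, ht, h⟩⟩
  | EU ψ₁ ψ₂ =>
      exact hfull.Cc_EU_of_not_W (hF _ hφ (by simp [Formula.children]))
        (hF _ hφ (by simp [Formula.children])) hW
  | EG ψ => exact hfull.Cc_EG_of_not_W (hF _ hφ rfl) hW

end Full

end Model

theorem W_C_complementary_general {σ P : Type} {F : Set (Formula P)}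
    (hF : SubformulaClosed F) (M : Model σ P F) (hfull : M.Full)
    (s : σ) (hs : s ∈ M.S) (φ : Formula P) (hφ : φ ∈ F) (hcomp : Formula.Compound φ) :
    (M.W s φ ∧ ¬ M.Cc s φ) ∨ (¬ M.W s φ ∧ M.Cc s φ) := by
  have hdisj := M.not_W_and_Cc s φ
  rcases hfull.W_or_Cc hF hs hφ hcomp with h | h
  · exact Or.inl ⟨h, fun h' => hdisj ⟨h, h'⟩⟩
  · exact Or.inr ⟨fun h' => hdisj ⟨h', h⟩, h⟩

/-- In a full model, for every state `s` and compound `φ ∈ F`, exactly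
one of `W_M(s,φ)` and `C_M(s,φ)` holds. -/
theorem W_C_complementary {σ P : Type} [Countable P] {F : Set (Formula P)}
    (hF : SubformulaClosed F) (M : Model σ P F) (hfull : M.Full)
    (s : σ) (hs : s ∈ M.S) (φ : Formula P) (hφ : φ ∈ F) (hcomp : Formula.Compound φ) :
    (M.W s φ ∧ ¬ M.Cc s φ) ∨ (¬ M.W s φ ∧ M.Cc s φ) :=
  W_C_complementary_general hF M hfull s hs φ hφ hcomp

end CTLviz
end

section
/- Let S be a set and X, Y ⊆ S, with complements X̄ = S∖X and Ȳ = S∖Y. Then the two sets of (finite or infinite) sequences over S given by A = X*·Y·S^≤ω and B = Ȳ^≤ω ∪ Ȳ*·(X̄∩Ȳ)·S^≤ω satisfy A ∪ B = S^≤ω and A ∩ B = ∅. -/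
namespace CTLviz

/-- The set of sequences `X* · Y · S^≤ω`. -/
def seqA {σ : Type} (S X Y : Set σ) : Set (FSeq σ) :=
  {ρ | SeqAll S ρ ∧ ∃ n b, ρ.get n = some b ∧ b ∈ Y ∧
    ∀ i < n, ∀ a, ρ.get i = some a → a ∈ X}

/-- The set of sequences `Ȳ^≤ω ∪ Ȳ* · (X̄∩Ȳ) · S^≤ω` (with `X̄ = S∖X`, `Ȳ = S∖Y`). -/
def seqB {σ : Type} (S X Y : Set σ) : Set (FSeq σ) :=
  {ρ | SeqAll S ρ ∧ (SeqAll (S \ Y) ρ ∨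
    ∃ n b, ρ.get n = some b ∧ b ∈ (S \ X) ∩ (S \ Y) ∧
      ∀ i < n, ∀ a, ρ.get i = some a → a ∈ S \ Y)}

/-! Scan a sequence for its first element that lies in `Y` or outside `X`. If there is none,
the sequence lies in `Ȳ^≤ω`; if that element is in `Y`, the sequence is in `A`, and otherwise it is
in `Ȳ*·(X̄∩Ȳ)·S^≤ω`. Conversely, the `Y`-element required by `A` can sit neither before, at, nor
after the `X̄∩Ȳ`-element required by `B`. -/

section

variable {σ : Type}

theorem FSeq.seqAll_or_exists_first_not_mem (ρ : FSeq σ) (Z : Set σ) :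
    SeqAll Z ρ ∨
      ∃ n b, ρ.get n = some b ∧ b ∉ Z ∧ ∀ i < n, ∀ a, ρ.get i = some a → a ∈ Z := by
  classical
  by_cases h : ∃ n b, ρ.get n = some b ∧ b ∉ Z
  · obtain ⟨b, hb, hbZ⟩ := Nat.find_spec h
    refine Or.inr ⟨Nat.find h, b, hb, hbZ, fun i hi a ha => ?_⟩
    by_contra haZ
    exact Nat.find_min h hi ⟨a, ha, haZ⟩
  · push Not at h
    exact Or.inl h

theorem mem_seqA_or_mem_seqB {S X Y : Set σ} {ρ : FSeq σ} (hS : SeqAll S ρ) :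
    ρ ∈ seqA S X Y ∨ ρ ∈ seqB S X Y := by
  rcases ρ.seqAll_or_exists_first_not_mem (X \ Y) with hall | ⟨n, b, hb, hbXY, hbefore⟩
  · exact Or.inr ⟨hS, Or.inl fun i a ha => ⟨hS i a ha, (hall i a ha).2⟩⟩
  · by_cases hbY : b ∈ Y
    · exact Or.inl ⟨hS, n, b, hb, hbY, fun i hi a ha => (hbefore i hi a ha).1⟩
    · have hbX : b ∉ X := fun hbX => hbXY ⟨hbX, hbY⟩
      exact Or.inr ⟨hS, Or.inr ⟨n, b, hb, ⟨⟨hS n b hb, hbX⟩, hS n b hb, hbY⟩,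
        fun i hi a ha => ⟨hS i a ha, (hbefore i hi a ha).2⟩⟩⟩

theorem disjoint_seqA_seqB (S X Y : Set σ) : Disjoint (seqA S X Y) (seqB S X Y) := by
  rw [Set.disjoint_left]
  rintro ρ ⟨-, n, b, hb, hbY, hbefore_n⟩ ⟨-, hall | ⟨m, c, hc, ⟨⟨-, hcX⟩, -, hcY⟩, hbefore_m⟩⟩
  · exact (hall n b hb).2 hbY
  · rcases lt_trichotomy n m with h | rfl | h
    · exact (hbefore_m n h b hb).2 hbY
    · exact hcY (Option.some_injective _ (hc.symm.trans hb) ▸ hbY)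
    · exact hcX (hbefore_n m h c hc)

end

theorem seqA_seqB_partition_general {σ : Type} (S X Y : Set σ) :
    seqA S X Y ∪ seqB S X Y = {ρ : FSeq σ | SeqAll S ρ} ∧
    seqA S X Y ∩ seqB S X Y = ∅ := by
  refine ⟨Set.Subset.antisymm ?_ fun ρ hS => mem_seqA_or_mem_seqB hS,
    Set.disjoint_iff_inter_eq_empty.mp (disjoint_seqA_seqB S X Y)⟩
  exact Set.union_subset (fun _ hA => hA.1) fun _ hB => hB.1

/-- `A = X*·Y·S^≤ω` and `B = Ȳ^≤ω ∪ Ȳ*·(X̄∩Ȳ)·S^≤ω` satisfy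
`A ∪ B = S^≤ω` and `A ∩ B = ∅`. -/
theorem seqA_seqB_partition {σ : Type} (S X Y : Set σ) (hX : X ⊆ S) (hY : Y ⊆ S) :
    seqA S X Y ∪ seqB S X Y = {ρ : FSeq σ | SeqAll S ρ} ∧
    seqA S X Y ∩ seqB S X Y = ∅ :=
  seqA_seqB_partition_general S X Y

end CTLviz
end

section
/- Let F be a subformula-closed set of CTL formulas and let M be a sound model over F. For every state s ∈ S and every compound formula φ ∈ F: W_M(s,φ) holds if and only if s ⊨^M φ, and C_M(s,φ) holds if and only if s ⊭^M φ. -/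
namespace CTLviz

/-! In a sound model the label of a state is its truth value and every state is closed, so each
clause of `W_M` and `C_M` is, after relabelling, the semantic clause of the formula or of its
negation. The only combinatorial point is the negation of an until-condition along a sequence:
it fails either because `ψ₂` never holds, or because, before the first `ψ₂`-position, some
position violates both `ψ₁` and `ψ₂`. -/

section SeqUntil

variable {α : Type*} {g : ℕ → Option α} {p q p' q' : α → Prop}

def SeqUntil (g : ℕ → Option α) (p q : α → Prop) : Prop :=
  ∃ n b, g n = some b ∧ q b ∧ ∀ i < n, ∀ a, g i = some a → p a

theorem SeqUntil.congr (hp : ∀ n a, g n = some a → (p a ↔ p' a))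
    (hq : ∀ n a, g n = some a → (q a ↔ q' a)) : SeqUntil g p q ↔ SeqUntil g p' q' :=
  exists₂_congr fun n b => and_congr_right fun hb => and_congr (hq n b hb) <|
    forall₂_congr fun i _ => forall₂_congr fun a ha => hp i a ha

theorem not_seqUntil_iff : ¬ SeqUntil g p q ↔
    (∀ n a, g n = some a → ¬ q a) ∨
      ∃ n b, g n = some b ∧ ¬ p b ∧ ¬ q b ∧ ∀ i < n, ∀ a, g i = some a → ¬ q a := by
  classical
  constructor
  · intro hnot
    by_cases hq : ∃ n a, g n = some a ∧ q a
    · right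
      obtain ⟨a₀, ha₀, hqa₀⟩ := Nat.find_spec hq
      have hbefore : ∀ i < Nat.find hq, ∀ a, g i = some a → ¬ q a :=
        fun i hi a ha hqa => Nat.find_min hq hi ⟨a, ha, hqa⟩
      obtain ⟨m, hm, b, hb, hpb⟩ : ∃ m < Nat.find hq, ∃ b, g m = some b ∧ ¬ p b := by
        by_contra! hall
        exact hnot ⟨_, a₀, ha₀, hqa₀, hall⟩
      exact ⟨m, b, hb, hpb, hbefore m hm b hb, fun i hi => hbefore i (hi.trans hm)⟩
    · exact Or.inl fun n a ha hqa => hq ⟨n, a, ha, hqa⟩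
  · rintro (hnever | ⟨m, c, hc, hpc, hqc, hbefore⟩) ⟨n, b, hb, hqb, hp⟩
    · exact hnever n b hb hqb
    · rcases lt_trichotomy n m with hnm | rfl | hmn
      · exact hbefore n hnm b hb hqb
      · exact hqc (Option.some.inj (hc.symm.trans hb) ▸ hqb)
      · exact hpc (hp m hmn c hc)

end SeqUntil

namespace Model

variable {σ P : Type} {F : Set (Formula P)} {M : Model σ P F} {s t : σ} {ρ : FSeq σ}
  {φ ψ ψ₁ ψ₂ : Formula P}

theorem IsPath.mem_S (hρ : M.IsPath s ρ) {n : ℕ} {a : σ} (ha : ρ.get n = some a) : a ∈ M.S :=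
  hρ.2.1 n a ha

theorem Sound.mem_C (hM : M.Sound) (ht : t ∈ M.S) : t ∈ M.C :=
  hM.1.1 ▸ ht

theorem Sound.L_eq_true_iff (hM : M.Sound) (ht : t ∈ M.S) (hψ : ψ ∈ F) :
    M.L t ψ = some true ↔ M.Sat ψ t :=
  hM.2 t ht ψ hψ

theorem Sound.L_eq_false_iff (hM : M.Sound) (ht : t ∈ M.S) (hψ : ψ ∈ F) :
    M.L t ψ = some false ↔ ¬ M.Sat ψ t := by
  rw [← hM.L_eq_true_iff ht hψ]
  obtain ⟨b, hb⟩ := Option.ne_none_iff_exists'.mp (hM.1.2 t ht ψ hψ)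
  cases b <;> simp [hb]

theorem Sound.W_EU_iff (hM : M.Sound) (hψ₁ : ψ₁ ∈ F) (hψ₂ : ψ₂ ∈ F) :
    M.W s (.EU ψ₁ ψ₂) ↔ M.Sat (.EU ψ₁ ψ₂) s :=
  exists_congr fun _ => and_congr_right fun hρ => SeqUntil.congr
    (fun _ _ ha => hM.L_eq_true_iff (hρ.1.mem_S ha) hψ₁)
    (fun _ _ ha => hM.L_eq_true_iff (hρ.1.mem_S ha) hψ₂)

theorem Sound.Cc_EU_iff (hM : M.Sound) (hψ₁ : ψ₁ ∈ F) (hψ₂ : ψ₂ ∈ F) :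
    M.Cc s (.EU ψ₁ ψ₂) ↔ ¬ M.Sat (.EU ψ₁ ψ₂) s := by
  have hnot : ¬ M.Sat (.EU ψ₁ ψ₂) s ↔
      ∀ ρ, M.IsMaxPath s ρ → ¬ SeqUntil ρ.get (M.Sat ψ₁) (M.Sat ψ₂) := by
    simp only [Sat, SeqUntil, not_exists, not_and]
  rw [hnot]
  refine forall_congr' fun ρ => imp_congr_right fun hρ => ?_
  have hfalse : ∀ {n a}, ρ.get n = some a → ∀ {ψ}, ψ ∈ F →
      (M.L a ψ = some false ↔ ¬ M.Sat ψ a) :=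
    fun ha _ hψ => hM.L_eq_false_iff (hρ.1.mem_S ha) hψ
  have hclosed : ∀ {n a}, ρ.get n = some a →
      (a ∈ M.C ∧ M.L a ψ₂ = some false ↔ ¬ M.Sat ψ₂ a) :=
    fun ha => by rw [and_iff_right (hM.mem_C (hρ.1.mem_S ha)), hfalse ha hψ₂]
  rw [not_seqUntil_iff]
  refine or_congr (forall₂_congr fun _ _ => imp_congr_right fun ha => hclosed ha)
    (exists₂_congr fun _ _ => and_congr_right fun hb => ?_)
  exact and_congr (hfalse hb hψ₁) <| and_congr (hfalse hb hψ₂) <|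
    forall₂_congr fun _ _ => forall₂_congr fun _ ha => hclosed ha

theorem Sound.W_EG_iff (hM : M.Sound) (hψ : ψ ∈ F) :
    M.W s (.EG ψ) ↔ M.Sat (.EG ψ) s :=
  exists_congr fun _ => and_congr_right fun hρ => by
    rw [and_iff_left fun _ _ ha _ => hM.mem_C (hρ.1.mem_S ha)]
    exact forall₂_congr fun _ _ => imp_congr_right fun ha =>
      hM.L_eq_true_iff (hρ.1.mem_S ha) hψ

theorem Sound.Cc_EG_iff (hM : M.Sound) (hψ : ψ ∈ F) :
    M.Cc s (.EG ψ) ↔ ¬ M.Sat (.EG ψ) s := by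
  simp only [Sat, not_exists, not_and, not_forall, exists_prop]
  refine forall_congr' fun ρ => imp_congr_right fun hρ =>
    exists₂_congr fun _ _ => and_congr_right fun hb => ?_
  rw [and_iff_left fun _ _ _ ha => hM.mem_C (hρ.1.mem_S ha)]
  exact hM.L_eq_false_iff (hρ.1.mem_S hb) hψ

theorem Sound.W_iff_sat (hM : M.Sound) (hF : SubformulaClosed F) (hs : s ∈ M.S)
    (hφ : φ ∈ F) (hcomp : φ.Compound) : M.W s φ ↔ M.Sat φ s :=
  match φ, hcomp with
  | .tt, _ => Iff.rfl
  | .neg _, _ => hM.L_eq_false_iff hs (hF _ hφ rfl)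
  | .or _ _, _ => or_congr (hM.L_eq_true_iff hs (hF _ hφ (.inl rfl)))
      (hM.L_eq_true_iff hs (hF _ hφ (.inr rfl)))
  | .EX _, _ => exists_congr fun _ => and_congr_right fun ht =>
      hM.L_eq_true_iff (M.R_sub _ ht).2 (hF _ hφ rfl)
  | .EU _ _, _ => hM.W_EU_iff (hF _ hφ (.inl rfl)) (hF _ hφ (.inr rfl))
  | .EG _, _ => hM.W_EG_iff (hF _ hφ rfl)

theorem Sound.Cc_iff_not_sat (hM : M.Sound) (hF : SubformulaClosed F) (hs : s ∈ M.S)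
    (hφ : φ ∈ F) (hcomp : φ.Compound) : M.Cc s φ ↔ ¬ M.Sat φ s :=
  match φ, hcomp with
  | .tt, _ => by simp [Cc, Sat]
  | .neg _, _ => (hM.L_eq_true_iff hs (hF _ hφ rfl)).trans not_not.symm
  | .or _ _, _ => (and_congr (hM.L_eq_false_iff hs (hF _ hφ (.inl rfl)))
      (hM.L_eq_false_iff hs (hF _ hφ (.inr rfl)))).trans not_or.symm
  | .EX _, _ => by
      rw [Cc, and_iff_right (hM.mem_C hs)]
      simp only [Sat, not_exists, not_and]
      exact forall₂_congr fun _ ht => hM.L_eq_false_iff (M.R_sub _ ht).2 (hF _ hφ rfl)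
  | .EU _ _, _ => hM.Cc_EU_iff (hF _ hφ (.inl rfl)) (hF _ hφ (.inr rfl))
  | .EG _, _ => hM.Cc_EG_iff (hF _ hφ rfl)

end Model

theorem W_C_iff_sat_general {σ P : Type} {F : Set (Formula P)}
    (hF : SubformulaClosed F) (M : Model σ P F) (hsound : M.Sound)
    (s : σ) (hs : s ∈ M.S) (φ : Formula P) (hφ : φ ∈ F) (hcomp : Formula.Compound φ) :
    (M.W s φ ↔ M.Sat φ s) ∧ (M.Cc s φ ↔ ¬ M.Sat φ s) :=
  ⟨hsound.W_iff_sat hF hs hφ hcomp, hsound.Cc_iff_not_sat hF hs hφ hcomp⟩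

/-- In a sound model, for every state `s` and compound `φ ∈ F`,
`W_M(s,φ)` holds iff `s ⊨ φ`, and `C_M(s,φ)` holds iff `s ⊭ φ`. -/
theorem W_C_iff_sat {σ P : Type} [Countable P] {F : Set (Formula P)}
    (hF : SubformulaClosed F) (M : Model σ P F) (hsound : M.Sound)
    (s : σ) (hs : s ∈ M.S) (φ : Formula P) (hφ : φ ∈ F) (hcomp : Formula.Compound φ) :
    (M.W s φ ↔ M.Sat φ s) ∧ (M.Cc s φ ↔ ¬ M.Sat φ s) :=
  W_C_iff_sat_general hF M hsound s hs φ hφ hcomp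

end CTLviz
end
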